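/- Multiplicative dynamic feedback fixed point: given c ∈ ℝ^q⟨⟨X⟩⟩ and purely improper d ∈ ℝ^m_{pi}⟨⟨X'⟩⟩ (|X| = m+1, |X'| = q+1), the series e := c ∘̄ δ_{(d^{⧢−1} ∘ c)^{∘−1}} is the unique fixed point of the strong contraction e ↦ c ∘̄ δ_{d ∘ e} on the complete ultrametric space ℝ^q⟨⟨X⟩⟩. -/

import Mathlib

open scoped BigOperators

namespace FPS

/-- A (noncommutative) formal power series over alphabet `X` is a map from words to `ℝ`. -/
abbrev Series (X : Type*) := List X → ℝ

noncomputable section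

variable {X : Type*} [DecidableEq X]

/-- The series `1·∅`. -/
def one : Series X := fun η => if η = [] then 1 else 0

/-- Cauchy (concatenation) product. -/
def cauchy (c d : Series X) : Series X := fun η =>
  ∑ i ∈ Finset.range (η.length + 1), c (η.take i) * d (η.drop i)

/-- Shuffle product. -/
def sh (c d : Series X) : List X → ℝ
  | [] => c [] * d []
  | x :: t => sh (fun w => c (x :: w)) d t + sh c (fun w => d (x :: w)) t

/-- Cauchy powers. -/
def cpow (c : Series X) : ℕ → Series X
  | 0 => one
  | k + 1 => cauchy c (cpow c k)

/-- Shuffle powers. -/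
def shpow (c : Series X) : ℕ → Series X
  | 0 => one
  | k + 1 => sh c (shpow c k)

/-- The proper series `1 - s/(s,∅)` entering the inverse formulas (negated proper part of `s/(s,∅)`). -/
def sprime (s : Series X) : Series X := fun w => if w = [] then 0 else - (s w / s [])

/-- Cauchy inverse `(s,∅)⁻¹ Σ_k (s')^k` of a purely improper series. -/
def cInv (s : Series X) : Series X := fun η =>
  (s [])⁻¹ * ∑ k ∈ Finset.range (η.length + 1), cpow (sprime s) k η

/-- Shuffle inverse `(s,∅)⁻¹ Σ_k (s')^{⧢k}` of a purely improper series. -/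
def shInv (s : Series X) : Series X := fun η =>
  (s [])⁻¹ * ∑ k ∈ Finset.range (η.length + 1), shpow (sprime s) k η

/-- The order: minimal length of a word in the support (`⊤` for the zero series). -/
def ord (c : Series X) : ℕ∞ := sInf ((fun η : List X => (η.length : ℕ∞)) '' {η | c η ≠ 0})

/-- `σ^n` with `σ^⊤ = 0`. -/
def powE (σ : ℝ) : ℕ∞ → ℝ := fun n => if n = ⊤ then 0 else σ ^ n.toNat

/-- The ultrametric `κ(c,d) = σ^{ord(c-d)}`. -/
def kappa (σ : ℝ) (c d : Series X) : ℝ := powE σ (ord (c - d))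

/-- Order of a vector of series (minimum over components). -/
def ordV {n : ℕ} (c : Fin n → Series X) : ℕ∞ := ⨅ i, ord (c i)

/-- Ultrametric on vectors of series. -/
def kappaV (σ : ℝ) {n : ℕ} (c d : Fin n → Series X) : ℝ := powE σ (ordV (c - d))

/-- Proper part `c - (c,∅)∅`. -/
def properPart (c : Series X) : Series X := fun w => if w = [] then 0 else c w

/-- Left concatenation by a letter: `x·s`. -/
def leftc (x : X) (s : Series X) : Series X := fun η =>
  match η with
  | [] => 0
  | y :: t => if y = x then s t else 0

end

noncomputable section

/-- `φ̄_d(η)` : the algebra homomorphism defining the multiplicative mixed composition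
product, with `φ̄_d(x_0)(w) = x_0 w` and `φ̄_d(x_i)(w) = x_i (d_i ⧢ w)`. -/
def phiWord {m : ℕ} (d : Fin m → Series (Fin (m + 1))) :
    List (Fin (m + 1)) → Series (Fin (m + 1)) → Series (Fin (m + 1))
  | [], w => w
  | i :: t, w =>
      Fin.cases (leftc 0 (phiWord d t w)) (fun j => leftc j.succ (sh (d j) (phiWord d t w))) i

/-- Multiplicative mixed composition product `c ∘̄ δ_d = Σ_η (c,η) φ̄_d(η)(1)`. -/
def mix {m : ℕ} (c : Series (Fin (m + 1))) (d : Fin m → Series (Fin (m + 1))) :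
    Series (Fin (m + 1)) := fun η =>
  ∑ k ∈ Finset.range (η.length + 1),
    ∑ v : List.Vector (Fin (m + 1)) k, c v.toList * phiWord d v.toList one η

/-- `ψ_e(η)` : the algebra homomorphism defining the composition product, with
`ψ_e(x'_i)(w) = x_0 (e_i ⧢ w)`, `e_0 = 1∅`. -/
def psiWord {ℓ m : ℕ} (e : Fin ℓ → Series (Fin (m + 1))) :
    List (Fin (ℓ + 1)) → Series (Fin (m + 1)) → Series (Fin (m + 1))
  | [], w => w
  | i :: t, w => leftc 0 (sh (Fin.cases one e i) (psiWord e t w))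

/-- Composition product `c ∘ e = Σ_η (c,η) ψ_e(η)(1)`. -/
def comp {ℓ m : ℕ} (c : Series (Fin (ℓ + 1))) (e : Fin ℓ → Series (Fin (m + 1))) :
    Series (Fin (m + 1)) := fun η =>
  ∑ k ∈ Finset.range (η.length + 1),
    ∑ v : List.Vector (Fin (ℓ + 1)) k, c v.toList * psiWord e v.toList one η

/-- The multiplicative composition product on `δ`-series:
`δ_c ∘ δ_d = δ_{d ⧢ (c ∘̄ δ_d)}`, expressed on the underlying series. -/
def star {m : ℕ} (c d : Fin m → Series (Fin (m + 1))) : Fin m → Series (Fin (m + 1)) :=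
  fun i => sh (d i) (mix (c i) d)

/-- The all-ones series vector (generating series of the identity `δ_1`). -/
def oneV {X : Type*} [DecidableEq X] (m : ℕ) : Fin m → Series X := fun _ => one

open Classical in
/-- The inverse `d^{∘-1}` in the multiplicative dynamic output feedback group: the unique
solution of `e = d^{⧢-1} ∘̄ δ_e`. -/
def dynInv {m : ℕ} (d : Fin m → Series (Fin (m + 1))) : Fin m → Series (Fin (m + 1)) :=
  if h : ∃ e : Fin m → Series (Fin (m + 1)), e = fun i => mix (shInv (d i)) e then h.choose
  else oneV m

/-- Shuffle power of a family: `c^{⧢n} = c_1^{⧢n_1} ⧢ ⋯ ⧢ c_ℓ^{⧢n_ℓ}`. -/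
def shFam {X : Type*} [DecidableEq X] {ℓ : ℕ} (c : Fin ℓ → Series X) (n : Fin ℓ →₀ ℕ) :
    Series X :=
  (List.finRange ℓ).foldr (fun i acc => sh (shpow (c i) (n i)) acc) one

/-- Wiener-Fliess composition product `d ∘̂ c = Σ_{η∈X̃*} (d,η) c^{⧢η}` of a commutative
series `d` with a (proper) noncommutative series vector `c`. -/
def wf {X : Type*} [DecidableEq X] {ℓ : ℕ} (d : MvPowerSeries (Fin ℓ) ℝ)
    (c : Fin ℓ → Series X) : Series X := fun η =>
  ∑ n ∈ Finset.Iic (Finsupp.equivFunOnFinite.symm fun _ : Fin ℓ => η.length),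
    MvPowerSeries.coeff n d * shFam c n η

end


/-- The multiplicative dynamic feedback product `c @̌ d = c ∘̄ δ_{(d^{⧢-1} ∘ c)^{∘-1}}`. -/
noncomputable def feedback {m q : ℕ} (c : Fin q → Series (Fin (m + 1)))
    (d : Fin m → Series (Fin (q + 1))) : Fin q → Series (Fin (m + 1)) :=
  fun i => mix (c i) (dynInv fun j => comp (shInv (d j)) c)

/-!
Both `c ∘̄ δ_E` and `s ∘ e` substitute, for each letter `i`, a letter `a i` followed by a shuffle
with a fixed series `f i`. Any such substitution satisfies
`x⁻¹(subst c) = Σ_{a i = x} f i ⧢ subst (i⁻¹ c)`; by induction on word length it is therefore a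
shuffle homomorphism, and its coefficients on words of length `≤ n` only see the `f i` on words of
length `< n`. Hence `e ↦ c ∘̄ δ_{d ∘ e}` is a strong contraction: it has at most one fixed point and
shrinks `κ` by the factor `σ`. The same argument shows that `E := (d^{⧢-1} ∘ c)^{∘-1}` exists. For
`e := c ∘̄ δ_E`, the identity `(s ∘ c) ∘̄ δ_E = s ∘ (c ∘̄ δ_E)` together with
`(d ∘ c)^{⧢-1} = d^{⧢-1} ∘ c` gives
`d ∘ e = (d ∘ c) ∘̄ δ_E = (d^{⧢-1} ∘ c)^{⧢-1} ∘̄ δ_E = E`, so `e` is that fixed point.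
-/

section Shuffle

variable {X : Type*}

/-- The left-shift operator `x⁻¹(c)`. -/
def leftShift (x : X) (c : Series X) : Series X := fun w => c (x :: w)

@[simp] lemma one_nil : (one : Series X) [] = 1 := rfl

@[simp] lemma one_cons (x : X) (t : List X) : (one : Series X) (x :: t) = 0 := rfl

lemma sh_nil (a b : Series X) : sh a b [] = a [] * b [] := rfl

lemma sh_cons (a b : Series X) (x : X) (t : List X) :
    sh a b (x :: t) = sh (leftShift x a) b t + sh a (leftShift x b) t := rfl

@[simp] lemma leftShift_apply (x : X) (c : Series X) (w : List X) :
    leftShift x c w = c (x :: w) := rfl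

@[simp] lemma leftShift_add (x : X) (a b : Series X) :
    leftShift x (a + b) = leftShift x a + leftShift x b := rfl

@[simp] lemma leftShift_smul (x : X) (r : ℝ) (a : Series X) :
    leftShift x (r • a) = r • leftShift x a := rfl

@[simp] lemma leftShift_zero (x : X) : leftShift x (0 : Series X) = 0 := rfl

@[simp] lemma leftShift_one (x : X) : leftShift x (one : Series X) = 0 := rfl

lemma leftShift_sh (x : X) (a b : Series X) :
    leftShift x (sh a b) = sh (leftShift x a) b + sh a (leftShift x b) := rfl

lemma leftShift_leftc [DecidableEq X] (x y : X) (s : Series X) :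
    leftShift y (leftc x s) = if y = x then s else 0 := by
  ext w; simp only [leftShift_apply, leftc]; split_ifs <;> rfl

lemma ext_leftShift {a b : Series X} (hnil : a [] = b [])
    (hcons : ∀ x, leftShift x a = leftShift x b) : a = b := by
  ext (_ | ⟨x, w⟩)
  · exact hnil
  · exact congrFun (hcons x) w

lemma sh_comm (a b : Series X) : sh a b = sh b a := by
  ext η
  induction η generalizing a b with
  | nil => exact mul_comm _ _
  | cons x t ih => rw [sh_cons, sh_cons, ih (leftShift x a), ih a, add_comm]

lemma sh_add (a b b' : Series X) : sh a (b + b') = sh a b + sh a b' := by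
  ext η
  induction η generalizing a b b' with
  | nil => exact mul_add _ _ _
  | cons x t ih =>
    simp only [Pi.add_apply, sh_cons, leftShift_add, ih]
    ring

lemma add_sh (a a' b : Series X) : sh (a + a') b = sh a b + sh a' b := by
  rw [sh_comm, sh_add, sh_comm b, sh_comm b]

lemma sh_smul (r : ℝ) (a b : Series X) : sh a (r • b) = r • sh a b := by
  ext η
  induction η generalizing a b with
  | nil => exact mul_left_comm _ _ _
  | cons x t ih =>
    simp only [Pi.smul_apply, smul_eq_mul, sh_cons, leftShift_smul, ih]
    ring

lemma smul_sh (r : ℝ) (a b : Series X) : sh (r • a) b = r • sh a b := by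
  rw [sh_comm, sh_smul, sh_comm]

@[simp] lemma sh_zero (a : Series X) : sh a 0 = 0 := by
  simpa using sh_smul 0 a 0

@[simp] lemma zero_sh (b : Series X) : sh 0 b = 0 := by
  rw [sh_comm, sh_zero]

lemma sub_sh (a a' b : Series X) : sh (a - a') b = sh a b - sh a' b := by
  rw [sub_eq_add_neg, ← neg_one_smul ℝ a', add_sh, smul_sh, neg_one_smul, sub_eq_add_neg]

lemma sh_sum {ι : Type*} (a : Series X) (s : Finset ι) (g : ι → Series X) :
    sh a (∑ i ∈ s, g i) = ∑ i ∈ s, sh a (g i) :=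
  map_sum (AddMonoidHom.mk' (sh a) (sh_add a)) g s

lemma sum_sh {ι : Type*} (s : Finset ι) (g : ι → Series X) (b : Series X) :
    sh (∑ i ∈ s, g i) b = ∑ i ∈ s, sh (g i) b := by
  simp only [sh_comm _ b, sh_sum]

@[simp] lemma one_sh (a : Series X) : sh one a = a := by
  ext η
  induction η generalizing a with
  | nil => exact one_mul _
  | cons x t ih => rw [sh_cons, leftShift_one, zero_sh, ih, Pi.zero_apply, zero_add]; rfl

@[simp] lemma sh_one (a : Series X) : sh a one = a := by
  rw [sh_comm, one_sh]

lemma sh_assoc (a b c : Series X) : sh (sh a b) c = sh a (sh b c) := by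
  ext η
  induction η generalizing a b c with
  | nil => exact mul_assoc _ _ _
  | cons x t ih =>
    simp only [sh_cons, leftShift_sh, add_sh, sh_add, Pi.add_apply, ih]
    ring

lemma sh_left_comm (a b c : Series X) : sh a (sh b c) = sh b (sh a c) := by
  rw [← sh_assoc, sh_comm a, sh_assoc]

end Shuffle

section Agreement

variable {X : Type*}

/-- `EqBelow n a b` says `n ≤ ord (a - b)`, i.e. `κ(a, b) ≤ σ ^ n`. -/
def EqBelow (n : ℕ) (a b : Series X) : Prop := ∀ u : List X, u.length < n → a u = b u

variable {n : ℕ} {a a' b b' : Series X}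

@[refl] lemma EqBelow.refl (n : ℕ) (a : Series X) : EqBelow n a a := fun _ _ => rfl

lemma EqBelow.mono {m : ℕ} (hmn : m ≤ n) (h : EqBelow n a b) : EqBelow m a b :=
  fun u hu => h u (hu.trans_le hmn)

lemma eqBelow_zero (a b : Series X) : EqBelow 0 a b := fun _ hu => absurd hu (Nat.not_lt_zero _)

lemma eqBelow_succ_iff :
    EqBelow (n + 1) a b ↔ a [] = b [] ∧ ∀ x, EqBelow n (leftShift x a) (leftShift x b) := by
  refine ⟨fun h => ⟨h [] n.succ_pos, fun x u hu => h (x :: u) (by simpa using hu)⟩, ?_⟩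
  rintro ⟨hnil, hcons⟩ (_ | ⟨x, u⟩) hu
  · exact hnil
  · exact hcons x u (by simpa using hu)

lemma eq_of_forall_eqBelow (h : ∀ n, EqBelow n a b) : a = b :=
  funext fun u => h (u.length + 1) u (lt_add_one _)

lemma EqBelow.add (ha : EqBelow n a a') (hb : EqBelow n b b') : EqBelow n (a + b) (a' + b') :=
  fun u hu => congrArg₂ (· + ·) (ha u hu) (hb u hu)

lemma EqBelow.sum {ι : Type*} (s : Finset ι) {g g' : ι → Series X}
    (h : ∀ i ∈ s, EqBelow n (g i) (g' i)) : EqBelow n (∑ i ∈ s, g i) (∑ i ∈ s, g' i) :=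
  fun u hu => by simpa only [Finset.sum_apply] using Finset.sum_congr rfl fun i hi => h i hi u hu

lemma EqBelow.sh (ha : EqBelow n a a') (hb : EqBelow n b b') :
    EqBelow n (sh a b) (sh a' b') := by
  induction n generalizing a a' b b' with
  | zero => exact eqBelow_zero _ _
  | succ n ih =>
    obtain ⟨ha₀, haₓ⟩ := eqBelow_succ_iff.1 ha
    obtain ⟨hb₀, hbₓ⟩ := eqBelow_succ_iff.1 hb
    refine eqBelow_succ_iff.2 ⟨by rw [sh_nil, sh_nil, ha₀, hb₀], fun x => ?_⟩
    rw [leftShift_sh, leftShift_sh]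
    exact (ih (haₓ x) (hb.mono n.le_succ)).add (ih (ha.mono n.le_succ) (hbₓ x))

lemma eqBelow_sh_zero {j l : ℕ} (ha : EqBelow j a 0) (hb : EqBelow l b 0) :
    EqBelow (j + l) (sh a b) 0 := by
  intro η hη
  induction η generalizing j l a b with
  | nil =>
    rcases Nat.eq_zero_or_pos j with rfl | hj
    · rw [sh_nil, hb [] (by simpa using hη), Pi.zero_apply, mul_zero]
    · rw [sh_nil, ha [] hj, Pi.zero_apply, zero_mul]
  | cons x t ih =>
    have ha' : EqBelow (j - 1) (leftShift x a) 0 := fun u hu => ha (x :: u) (by simp; omega)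
    have hb' : EqBelow (l - 1) (leftShift x b) 0 := fun u hu => hb (x :: u) (by simp; omega)
    simp only [List.length_cons] at hη
    rw [sh_cons, ih ha' hb (by omega), ih ha hb' (by omega)]
    simp only [Pi.zero_apply, add_zero]

end Agreement

section ShuffleInverse

variable {X : Type*}

lemma sprime_nil (s : Series X) : sprime s [] = 0 := if_pos rfl

lemma eqBelow_shpow {p : Series X} (hp : p [] = 0) (k : ℕ) : EqBelow k (shpow p k) 0 := by
  induction k with
  | zero => exact eqBelow_zero _ _
  | succ k ih =>
    have hp' : EqBelow 1 p 0 := fun u hu => by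
      rw [List.length_eq_zero_iff.1 (Nat.lt_one_iff.1 hu)]
      exact hp
    have h := eqBelow_sh_zero hp' ih
    rwa [Nat.add_comm] at h

lemma shInv_nil (s : Series X) : shInv s [] = (s [])⁻¹ := by
  simp [shInv, shpow]

lemma eqBelow_shInv (s : Series X) (N : ℕ) :
    EqBelow N (shInv s) ((s [])⁻¹ • ∑ k ∈ Finset.range N, shpow (sprime s) k) := by
  intro η hη
  simp only [shInv, Pi.smul_apply, Finset.sum_apply, smul_eq_mul]
  congr 1
  refine Finset.sum_subset (by intro k hk; simp at hk ⊢; omega) fun k _ hk => ?_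
  exact eqBelow_shpow (sprime_nil s) k η (by simp at hk; omega)

lemma smul_one_sub_sprime {s : Series X} (hs : s [] ≠ 0) : s [] • (one - sprime s) = s := by
  ext (_ | ⟨x, w⟩)
  · simp [sprime]
  · simp [sprime]
    field_simp

lemma sh_shInv {s : Series X} (hs : s [] ≠ 0) : sh s (shInv s) = one := by
  ext η
  set p := sprime s
  -- `s = s∅ • (1 - p)`, so `s ⧢ Σ_{k<N} p^{⧢k}` telescopes to `s∅ • (1 - p^{⧢N})`.
  have htrunc := (EqBelow.refl _ s).sh (eqBelow_shInv s (η.length + 1)) η (lt_add_one _)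
  have hstep (k : ℕ) : sh s (shpow p k) = s [] • (shpow p k - shpow p (k + 1)) := by
    conv_lhs => rw [← smul_one_sub_sprime hs]
    rw [smul_sh, sub_sh, one_sh]
    rfl
  rw [htrunc, sh_smul, sh_sum, Finset.sum_congr rfl fun k _ => hstep k, ← Finset.smul_sum,
    smul_smul, inv_mul_cancel₀ hs, one_smul, Finset.sum_range_sub']
  rw [Pi.sub_apply, eqBelow_shpow (sprime_nil s) _ η (lt_add_one _), Pi.zero_apply, sub_zero]
  rfl

lemma eq_shInv_of_sh_eq_one {t u : Series X} (ht : t [] ≠ 0) (h : sh t u = one) :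
    u = shInv t := by
  rw [← sh_one u, ← sh_shInv ht, ← sh_assoc, sh_comm u, h, one_sh]

end ShuffleInverse

lemma sum_vector_zero {α M : Type*} [Fintype α] [AddCommMonoid M] (f : List.Vector α 0 → M) :
    ∑ v, f v = f List.Vector.nil := by
  have : Unique (List.Vector α 0) := ⟨⟨List.Vector.nil⟩, List.Vector.eq_nil⟩
  exact (Fintype.sum_unique f).trans (congrArg f (List.Vector.eq_nil _))

lemma sum_vector_succ {α M : Type*} [Fintype α] [AddCommMonoid M] (k : ℕ)
    (f : List.Vector α (k + 1) → M) : ∑ v, f v = ∑ x, ∑ t : List.Vector α k, f (x ::ᵥ t) := by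
  rw [← Fintype.sum_prod_type']
  exact (Fintype.sum_equiv ⟨fun p => p.1 ::ᵥ p.2, fun v => (v.head, v.tail), fun p => by simp,
    fun v => List.Vector.cons_head_tail v⟩ _ f fun _ => rfl).symm

section Substitution

variable {X Y : Type*} [DecidableEq X]

def substWord (a : Y → X) (f : Y → Series X) : List Y → Series X
  | [] => one
  | i :: t => leftc (a i) (sh (f i) (substWord a f t))

/-- The common shape of `∘̄ δ` and `∘`: `mix c E = subst id (1, E₁, …, Eₘ) c` and
`comp s e = subst (fun _ => 0) (1, e₁, …, e_ℓ) s`. -/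
def subst [Fintype Y] (a : Y → X) (f : Y → Series X) (c : Series Y) : Series X := fun η =>
  ∑ k ∈ Finset.range (η.length + 1), ∑ v : List.Vector Y k,
    c v.toList * substWord a f v.toList η

lemma eqBelow_leftc {n : ℕ} {s : Series X} (x : X) (hs : EqBelow n s 0) :
    EqBelow (n + 1) (leftc x s) 0 := by
  refine eqBelow_succ_iff.2 ⟨rfl, fun y => ?_⟩
  rw [leftShift_leftc, leftShift_zero]
  split_ifs
  exacts [hs, EqBelow.refl _ _]

lemma eqBelow_substWord (a : Y → X) (f : Y → Series X) (v : List Y) :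
    EqBelow v.length (substWord a f v) 0 := by
  induction v with
  | nil => exact eqBelow_zero _ _
  | cons i t ih =>
    exact eqBelow_leftc (a i) (by simpa using eqBelow_sh_zero (eqBelow_zero (f i) 0) ih)

variable [Fintype Y] (a : Y → X) (f : Y → Series X)

lemma eqBelow_subst_sum_range (c : Series Y) (N : ℕ) :
    EqBelow N (subst a f c)
      (∑ k ∈ Finset.range N, ∑ v : List.Vector Y k, c v.toList • substWord a f v.toList) := by
  intro η hη
  simp only [subst, Finset.sum_apply, Pi.smul_apply, smul_eq_mul]
  refine Finset.sum_subset (by intro k hk; simp at hk ⊢; omega) fun k _ hk => ?_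
  refine Finset.sum_eq_zero fun v _ => ?_
  rw [eqBelow_substWord a f v.toList η (by simp at hk; simp; omega), Pi.zero_apply, mul_zero]

@[simp] lemma subst_nil (c : Series Y) : subst a f c [] = c [] := by
  simp [subst, substWord]

lemma subst_add (c c' : Series Y) : subst a f (c + c') = subst a f c + subst a f c' := by
  ext η
  simp only [subst, Pi.add_apply, add_mul, Finset.sum_add_distrib]

@[simp] lemma subst_zero : subst a f 0 = 0 := by
  ext η
  simp [subst]

lemma subst_sum {ι : Type*} (s : Finset ι) (g : ι → Series Y) :
    subst a f (∑ i ∈ s, g i) = ∑ i ∈ s, subst a f (g i) :=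
  map_sum (AddMonoidHom.mk' (subst a f) (subst_add a f)) g s

lemma leftShift_subst (x : X) (c : Series Y) :
    leftShift x (subst a f c) = ∑ i with a i = x, sh (f i) (subst a f (leftShift i c)) := by
  ext t
  have hrhs (i : Y) : sh (f i) (subst a f (leftShift i c)) t = ∑ k ∈ Finset.range (t.length + 1),
      ∑ u : List.Vector Y k, c (i :: u.toList) * sh (f i) (substWord a f u.toList) t := by
    rw [(EqBelow.refl _ (f i)).sh (eqBelow_subst_sum_range a f _ _) t (lt_add_one _), sh_sum]
    simp only [Finset.sum_apply, sh_sum, sh_smul, Pi.smul_apply, smul_eq_mul, leftShift_apply]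
  rw [Finset.sum_apply, Finset.sum_filter]
  simp only [hrhs]
  simp only [leftShift_apply, subst, List.length_cons, Finset.sum_range_succ' _ (t.length + 1),
    sum_vector_zero, List.Vector.toList_nil, substWord, one_cons, mul_zero, add_zero,
    sum_vector_succ, List.Vector.toList_cons]
  rw [Finset.sum_comm]
  refine Finset.sum_congr rfl fun i _ => ?_
  split_ifs with h
  · simp [leftc, h]
  · simp [leftc, Ne.symm h]

lemma subst_sh (c c' : Series Y) : subst a f (sh c c') = sh (subst a f c) (subst a f c') := by
  refine eq_of_forall_eqBelow fun n => ?_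
  induction n generalizing c c' with
  | zero => exact eqBelow_zero _ _
  | succ n ih =>
    refine eqBelow_succ_iff.2 ⟨by simp [sh_nil], fun x => ?_⟩
    rw [leftShift_subst, leftShift_sh, leftShift_subst, leftShift_subst, sum_sh, sh_sum,
      ← Finset.sum_add_distrib]
    refine EqBelow.sum _ fun i _ => ?_
    rw [leftShift_sh, subst_add, sh_add, sh_assoc, sh_left_comm _ (f i)]
    exact ((EqBelow.refl _ _).sh (ih _ _)).add ((EqBelow.refl _ _).sh (ih _ _))

@[simp] lemma subst_one : subst a f one = one :=
  ext_leftShift (by simp) fun x => by simp [leftShift_subst]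

lemma EqBelow.subst {n : ℕ} {f f' : Y → Series X} (hf : ∀ i, EqBelow n (f i) (f' i))
    (c : Series Y) : EqBelow (n + 1) (subst a f c) (subst a f' c) := by
  induction n generalizing c with
  | zero => exact eqBelow_succ_iff.2 ⟨by simp, fun _ => eqBelow_zero _ _⟩
  | succ n ih =>
    refine eqBelow_succ_iff.2 ⟨by simp, fun x => ?_⟩
    rw [leftShift_subst, leftShift_subst]
    exact EqBelow.sum _ fun i _ => (hf i).sh (ih (fun j => (hf j).mono n.le_succ) _)

end Substitution

section MixComp

variable {ℓ m : ℕ}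

lemma mix_eq_subst (c : Series (Fin (m + 1))) (E : Fin m → Series (Fin (m + 1))) :
    mix c E = subst id (Fin.cases one E) c := by
  have hword (v : List (Fin (m + 1))) : phiWord E v one = substWord id (Fin.cases one E) v := by
    induction v with
    | nil => rfl
    | cons i t ih =>
      cases i using Fin.cases <;> simp [phiWord, substWord, ih]
  ext η
  simp only [mix, subst, hword]

lemma comp_eq_subst (s : Series (Fin (ℓ + 1))) (e : Fin ℓ → Series (Fin (m + 1))) :
    comp s e = subst (fun _ => 0) (Fin.cases one e) s := by
  have hword (v : List (Fin (ℓ + 1))) :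
      psiWord e v one = substWord (fun _ => 0) (Fin.cases one e) v := by
    induction v with
    | nil => rfl
    | cons i t ih => simp [psiWord, substWord, ih]
  ext η
  simp only [comp, subst, hword]

lemma leftShift_mix_zero (c : Series (Fin (m + 1))) (E : Fin m → Series (Fin (m + 1))) :
    leftShift 0 (mix c E) = mix (leftShift 0 c) E := by
  simp [mix_eq_subst, leftShift_subst, Finset.filter_eq']

lemma leftShift_mix_succ (c : Series (Fin (m + 1))) (E : Fin m → Series (Fin (m + 1)))
    (j : Fin m) : leftShift j.succ (mix c E) = sh (E j) (mix (leftShift j.succ c) E) := by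
  simp [mix_eq_subst, leftShift_subst, Finset.filter_eq']

lemma leftShift_comp_zero (s : Series (Fin (ℓ + 1))) (e : Fin ℓ → Series (Fin (m + 1))) :
    leftShift 0 (comp s e) = ∑ i, sh (Fin.cases one e i) (comp (leftShift i s) e) := by
  simp [comp_eq_subst, leftShift_subst]

lemma leftShift_comp_succ (s : Series (Fin (ℓ + 1))) (e : Fin ℓ → Series (Fin (m + 1)))
    (j : Fin m) : leftShift j.succ (comp s e) = 0 := by
  simp [comp_eq_subst, leftShift_subst, (Fin.succ_ne_zero j).symm]

lemma EqBelow.mix {n : ℕ} {E E' : Fin m → Series (Fin (m + 1))}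
    (hE : ∀ j, EqBelow n (E j) (E' j)) (c : Series (Fin (m + 1))) :
    EqBelow (n + 1) (mix c E) (mix c E') := by
  rw [mix_eq_subst, mix_eq_subst]
  exact EqBelow.subst _ (fun i => i.cases (EqBelow.refl _ _) hE) c

lemma EqBelow.comp {n : ℕ} {e e' : Fin ℓ → Series (Fin (m + 1))}
    (he : ∀ j, EqBelow n (e j) (e' j)) (s : Series (Fin (ℓ + 1))) :
    EqBelow (n + 1) (comp s e) (comp s e') := by
  rw [comp_eq_subst, comp_eq_subst]
  exact EqBelow.subst _ (fun i => i.cases (EqBelow.refl _ _) he) s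

lemma comp_sh (s s' : Series (Fin (ℓ + 1))) (e : Fin ℓ → Series (Fin (m + 1))) :
    comp (sh s s') e = sh (comp s e) (comp s' e) := by
  simp only [comp_eq_subst, subst_sh]

lemma comp_one (e : Fin ℓ → Series (Fin (m + 1))) : comp one e = one := by
  rw [comp_eq_subst, subst_one]

lemma mix_sh (a b : Series (Fin (m + 1))) (E : Fin m → Series (Fin (m + 1))) :
    mix (sh a b) E = sh (mix a E) (mix b E) := by
  simp only [mix_eq_subst, subst_sh]

lemma mix_sum {ι : Type*} (s : Finset ι) (g : ι → Series (Fin (m + 1)))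
    (E : Fin m → Series (Fin (m + 1))) : mix (∑ i ∈ s, g i) E = ∑ i ∈ s, mix (g i) E := by
  simp only [mix_eq_subst, subst_sum]

lemma mix_comp (s : Series (Fin (ℓ + 1))) (c : Fin ℓ → Series (Fin (m + 1)))
    (E : Fin m → Series (Fin (m + 1))) : mix (comp s c) E = comp s fun i => mix (c i) E := by
  have hcases (i : Fin (ℓ + 1)) :
      mix (Fin.cases one c i) E = Fin.cases one (fun i => mix (c i) E) i := by
    cases i using Fin.cases <;> simp [mix_eq_subst]
  refine eq_of_forall_eqBelow fun n => ?_
  induction n generalizing s with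
  | zero => exact eqBelow_zero _ _
  | succ n ih =>
    refine eqBelow_succ_iff.2 ⟨by simp [mix_eq_subst, comp_eq_subst], fun x => ?_⟩
    cases x using Fin.cases with
    | zero =>
      rw [leftShift_mix_zero, leftShift_comp_zero, leftShift_comp_zero, mix_sum]
      refine EqBelow.sum _ fun i _ => ?_
      rw [mix_sh, hcases]
      exact (EqBelow.refl _ _).sh (ih _)
    | succ j =>
      rw [leftShift_mix_succ, leftShift_comp_succ, leftShift_comp_succ, mix_eq_subst, subst_zero,
        sh_zero]

end MixComp

section Ultrametric

variable {X : Type*}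

lemma natCast_le_ord_iff (a : Series X) (n : ℕ) : (n : ℕ∞) ≤ ord a ↔ EqBelow n a 0 := by
  simp only [ord, le_sInf_iff, Set.forall_mem_image, Set.mem_ofPred_eq, Nat.cast_le, EqBelow,
    Pi.zero_apply]
  exact ⟨fun h u hu => by_contra fun hne => (h hne).not_gt hu,
    fun h u hu => le_of_not_gt fun hlt => hu (h u hlt)⟩

lemma natCast_le_ordV_sub_iff {k : ℕ} (e₁ e₂ : Fin k → Series X) (n : ℕ) :
    (n : ℕ∞) ≤ ordV (e₁ - e₂) ↔ ∀ i, EqBelow n (e₁ i) (e₂ i) := by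
  simp only [ordV, le_iInf_iff, natCast_le_ord_iff, EqBelow, Pi.sub_apply, Pi.zero_apply,
    sub_eq_zero]

lemma powE_le_powE {σ : ℝ} (h₀ : 0 ≤ σ) (h₁ : σ ≤ 1) {x y : ℕ∞} (hxy : x ≤ y) :
    powE σ y ≤ powE σ x := by
  induction y using ENat.recTopCoe with
  | top =>
    rw [show powE σ ⊤ = 0 from if_pos rfl, powE]
    split_ifs
    exacts [le_rfl, pow_nonneg h₀ _]
  | coe y =>
    lift x to ℕ using ne_top_of_le_ne_top (ENat.natCast_ne_top y) hxy
    simp only [powE, ENat.natCast_ne_top, if_false, ENat.toNat_natCast]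
    exact pow_le_pow_of_le_one h₀ h₁ (by exact_mod_cast hxy)

lemma powE_add_one (σ : ℝ) (x : ℕ∞) : powE σ (x + 1) = σ * powE σ x := by
  induction x using ENat.recTopCoe with
  | top => simp [powE]
  | coe x =>
    simp only [powE, ← Nat.cast_add_one, ENat.natCast_ne_top, if_false, ENat.toNat_natCast,
      pow_succ']

end Ultrametric

section StrongContraction

variable {X ι : Type*}

def IsStrongContraction (G : (ι → Series X) → ι → Series X) : Prop :=
  ∀ n e₁ e₂, (∀ i, EqBelow n (e₁ i) (e₂ i)) → ∀ i, EqBelow (n + 1) (G e₁ i) (G e₂ i)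

namespace IsStrongContraction

variable {G : (ι → Series X) → ι → Series X}

lemma eqBelow_iterate (hG : IsStrongContraction G) (e₀ : ι → Series X) {n N : ℕ} (hnN : n ≤ N)
    (i : ι) : EqBelow n (G^[n] e₀ i) (G^[N] e₀ i) := by
  induction n generalizing N i with
  | zero => exact eqBelow_zero _ _
  | succ n ih =>
    obtain ⟨N, rfl⟩ := Nat.exists_eq_add_of_le' (Nat.zero_lt_of_lt hnN)
    rw [Function.iterate_succ_apply', Function.iterate_succ_apply']
    exact hG n _ _ (ih (by omega)) i

/-- The fixed point is read off the iterates: its coefficient at `η` is that of `G^[|η|+1] 0`. -/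
lemma exists_isFixedPt (hG : IsStrongContraction G) : ∃ e, Function.IsFixedPt G e := by
  refine ⟨fun i η => G^[η.length + 1] 0 i η, funext fun i => funext fun η => ?_⟩
  have hagree (j : ι) :
      EqBelow η.length (fun η' => G^[η'.length + 1] 0 j η') (G^[η.length] 0 j) :=
    fun u hu => hG.eqBelow_iterate 0 hu j u (lt_add_one _)
  rw [hG _ _ _ hagree i η (lt_add_one _), ← Function.iterate_succ_apply' G]

lemma eq_of_isFixedPt (hG : IsStrongContraction G) {e₁ e₂ : ι → Series X}
    (h₁ : Function.IsFixedPt G e₁) (h₂ : Function.IsFixedPt G e₂) : e₁ = e₂ := by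
  have key (n : ℕ) : ∀ i, EqBelow n (e₁ i) (e₂ i) := by
    induction n with
    | zero => exact fun _ => eqBelow_zero _ _
    | succ n ih => rw [← h₁, ← h₂]; exact hG n _ _ ih
  exact funext fun i => eq_of_forall_eqBelow fun n => key n i

lemma kappaV_le {k : ℕ} {G : (Fin k → Series X) → Fin k → Series X}
    (hG : IsStrongContraction G) {σ : ℝ} (h₀ : 0 ≤ σ) (h₁ : σ ≤ 1) (e₁ e₂ : Fin k → Series X) :
    kappaV σ (G e₁) (G e₂) ≤ σ * kappaV σ e₁ e₂ := by
  rw [kappaV, kappaV, ← powE_add_one]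
  refine powE_le_powE h₀ h₁ (ENat.forall_natCast_le_iff_le.1 fun n hn => ?_)
  rcases n with _ | n
  · exact bot_le
  · have hn' : (n : ℕ∞) ≤ ordV (e₁ - e₂) := by
      rwa [Nat.cast_add_one, ENat.add_le_add_iff_right ENat.one_ne_top] at hn
    exact (natCast_le_ordV_sub_iff _ _ _).2 <| hG n _ _ <| (natCast_le_ordV_sub_iff _ _ _).1 hn'

end IsStrongContraction

end StrongContraction

lemma dynInv_eq_mix {m : ℕ} (D : Fin m → Series (Fin (m + 1))) :
    dynInv D = fun j => mix (shInv (D j)) (dynInv D) := by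
  have hcontr : IsStrongContraction fun E : Fin m → Series (Fin (m + 1)) =>
      fun j => mix (shInv (D j)) E := fun _ _ _ hE j => EqBelow.mix hE _
  have hex : ∃ E, E = fun j => mix (shInv (D j)) E :=
    hcontr.exists_isFixedPt.imp fun _ hE => hE.symm
  rw [dynInv, dif_pos hex]
  exact hex.choose_spec

/-- The series `e := c ∘̄ δ_{(d^{⧢-1} ∘ c)^{∘-1}}` is the unique fixed
point of the strong contraction `e ↦ c ∘̄ δ_{d ∘ e}` on `ℝ^q⟨⟨X⟩⟩`. -/
theorem mult_dyn_feedback_fixed_point (m q : ℕ)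
    (c : Fin q → Series (Fin (m + 1))) (d : Fin m → Series (Fin (q + 1)))
    (hd : ∀ j, d j [] ≠ 0) :
    ((fun i => mix (c i) fun j => comp (d j) (feedback c d)) = feedback c d) ∧
    (∀ e' : Fin q → Series (Fin (m + 1)),
      (fun i => mix (c i) fun j => comp (d j) e') = e' → e' = feedback c d) ∧
    (∀ σ : ℝ, 0 < σ → σ < 1 → ∀ e₁ e₂ : Fin q → Series (Fin (m + 1)),
      kappaV σ (fun i => mix (c i) fun j => comp (d j) e₁)
        (fun i => mix (c i) fun j => comp (d j) e₂) ≤ σ * kappaV σ e₁ e₂) := by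
  set D : Fin m → Series (Fin (m + 1)) := fun j => comp (shInv (d j)) c
  have hcontr : IsStrongContraction fun e : Fin q → Series (Fin (m + 1)) =>
      fun i => mix (c i) fun j => comp (d j) e :=
    fun n _ _ he i => EqBelow.mix (fun j => (EqBelow.comp he (d j)).mono n.le_succ) (c i)
  have hinv (j : Fin m) : shInv (D j) = comp (d j) c := by
    refine (eq_shInv_of_sh_eq_one ?_ ?_).symm
    · simpa [D, comp_eq_subst, shInv_nil] using hd j
    · rw [← comp_sh, sh_comm, sh_shInv (hd j), comp_one]
  have hcomp : (fun j => comp (d j) (feedback c d)) = dynInv D := by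
    rw [dynInv_eq_mix D]
    funext j
    rw [hinv, mix_comp]
    rfl
  have hfix : (fun i => mix (c i) fun j => comp (d j) (feedback c d)) = feedback c d := by
    rw [hcomp]
    rfl
  exact ⟨hfix, fun e' he' => hcontr.eq_of_isFixedPt he' hfix,
    fun σ h₀ h₁ => hcontr.kappaV_le h₀.le h₁.le⟩

end FPS
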